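/- Let ψ(x) = [log((|x|²+1)^{1/2}) + 1]² for x ∈ ℝⁿ. Then there exists a constant C > 0 such that the Hessian of ψ satisfies |D²ψ(x)| ≤ C(1 + ψ(x)^{1/2})/(|x|²+1) for every x ∈ ℝⁿ. -/

import Mathlib

noncomputable section

/-- The Euclidean state space `ℝⁿ`. -/
abbrev Eucl (n : ℕ) := EuclideanSpace ℝ (Fin n)

/-- `ψ(x) = [log((|x|²+1)^{1/2}) + 1]²`. -/
def psiFun {n : ℕ} (x : Eucl n) : ℝ :=
  (Real.log ((‖x‖ ^ 2 + 1) ^ ((1 : ℝ) / 2)) + 1) ^ 2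

namespace PsiAux

/-- `h(t) = (log(t+1)/2 + 1)²`, so that `ψ(x) = h(‖x‖²)`. -/
def h (t : ℝ) : ℝ := (Real.log (t + 1) / 2 + 1) ^ 2

/-- first derivative of `h` -/
def h1 (t : ℝ) : ℝ := (Real.log (t + 1) / 2 + 1) / (t + 1)

/-- derivative of `h1` -/
def h2 (t : ℝ) : ℝ := (1 / 2 - (Real.log (t + 1) / 2 + 1)) / (t + 1) ^ 2

lemma hasDerivAt_log1 {t : ℝ} (ht : 0 < t + 1) :
    HasDerivAt (fun s : ℝ => Real.log (s + 1)) (1 / (t + 1)) t := by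
  have := ((hasDerivAt_id t).add_const 1).log (by simp only [id_eq]; intro h; linarith)
  simpa using this

lemma hasDerivAt_h {t : ℝ} (ht : 0 < t + 1) : HasDerivAt h (h1 t) t := by
  have hu : HasDerivAt (fun s : ℝ => Real.log (s + 1) / 2 + 1) (1 / (2 * (t + 1))) t := by
    have := ((hasDerivAt_log1 ht).div_const 2).add_const 1
    refine this.congr_deriv ?_
    field_simp
  have := hu.pow 2
  rw [show h = (fun s : ℝ => Real.log (s + 1) / 2 + 1) ^ 2 from rfl]
  refine this.congr_deriv ?_
  unfold h1
  field_simp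
  norm_num
  ring

lemma hasDerivAt_h1 {t : ℝ} (ht : 0 < t + 1) : HasDerivAt h1 (h2 t) t := by
  have hu : HasDerivAt (fun s : ℝ => Real.log (s + 1) / 2 + 1) (1 / (2 * (t + 1))) t := by
    have := ((hasDerivAt_log1 ht).div_const 2).add_const 1
    refine this.congr_deriv ?_
    field_simp
  have hv : HasDerivAt (fun s : ℝ => s + 1) 1 t := (hasDerivAt_id t).add_const 1
  have := hu.div hv (by linarith)
  rw [show h1 = (fun s : ℝ => Real.log (s + 1) / 2 + 1) / (fun s : ℝ => s + 1) from rfl]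
  refine this.congr_deriv ?_
  unfold h2
  field_simp

variable {n : ℕ}

lemma psiFun_eq (x : Eucl n) : psiFun x = h (‖x‖ ^ 2) := by
  have hpos : (0 : ℝ) < ‖x‖ ^ 2 + 1 := by positivity
  rw [psiFun, h, Real.log_rpow hpos]
  ring_nf

lemma hasFDerivAt_psi (x : Eucl n) :
    HasFDerivAt psiFun (h1 (‖x‖ ^ 2) • (2 • innerSL ℝ x)) x := by
  have hq : HasFDerivAt (fun y : Eucl n => ‖y‖ ^ 2) (2 • innerSL ℝ x) x :=
    (hasStrictFDerivAt_norm_sq x).hasFDerivAt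
  have ht : (0 : ℝ) < ‖x‖ ^ 2 + 1 := by positivity
  have := (hasDerivAt_h ht).comp_hasFDerivAt x hq
  have heq : psiFun (n := n) = fun y : Eucl n => h (‖y‖ ^ 2) := funext psiFun_eq
  rw [heq]
  exact this

/-- the first derivative as a function -/
def D (x : Eucl n) : Eucl n →L[ℝ] ℝ := h1 (‖x‖ ^ 2) • (2 • innerSL ℝ x)

lemma fderiv_psi : fderiv ℝ (psiFun (n := n)) = D := by
  funext x
  exact (hasFDerivAt_psi x).fderiv

/-- the second derivative -/
def B (x : Eucl n) : Eucl n →L[ℝ] Eucl n →L[ℝ] ℝ :=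
  h1 (‖x‖ ^ 2) • (2 • (innerSL ℝ : Eucl n →L[ℝ] Eucl n →L[ℝ] ℝ)) +
    (h2 (‖x‖ ^ 2) • (2 • innerSL ℝ x)).smulRight (2 • innerSL ℝ x)

lemma hasFDerivAt_D (x : Eucl n) : HasFDerivAt (D (n := n)) (B x) x := by
  have hq : HasFDerivAt (fun y : Eucl n => ‖y‖ ^ 2) (2 • innerSL ℝ x) x :=
    (hasStrictFDerivAt_norm_sq x).hasFDerivAt
  have ht : (0 : ℝ) < ‖x‖ ^ 2 + 1 := by positivity
  have hc : HasFDerivAt (fun y : Eucl n => h1 (‖y‖ ^ 2))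
      (h2 (‖x‖ ^ 2) • (2 • innerSL ℝ x)) x :=
    (hasDerivAt_h1 (t := ‖x‖ ^ 2) ht).comp_hasFDerivAt (h₂ := h1) x hq
  have hf : HasFDerivAt (fun y : Eucl n => (2 • innerSL ℝ y : Eucl n →L[ℝ] ℝ))
      (2 • (innerSL ℝ : Eucl n →L[ℝ] Eucl n →L[ℝ] ℝ)) x :=
    (2 • (innerSL ℝ : Eucl n →L[ℝ] Eucl n →L[ℝ] ℝ)).hasFDerivAt
  have := hc.smul hf
  exact this

set_option maxHeartbeats 1000000 in
set_option synthInstance.maxHeartbeats 400000 in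
lemma norm_B_le (x : Eucl n) :
    ‖B x‖ ≤ |h1 (‖x‖ ^ 2)| * 2 + |h2 (‖x‖ ^ 2)| * (2 * ‖x‖) * (2 * ‖x‖) := by
  unfold B
  have hI : ‖(innerSL ℝ : Eucl n →L[ℝ] Eucl n →L[ℝ] ℝ)‖ ≤ 1 := norm_innerSL_le ℝ
  have h2I : ‖(2 • (innerSL ℝ : Eucl n →L[ℝ] Eucl n →L[ℝ] ℝ))‖ ≤ 2 := by
    rw [two_smul]
    refine (ContinuousLinearMap.opNorm_add_le _ _).trans ?_
    linarith
  have hA : ‖h1 (‖x‖ ^ 2) • (2 • (innerSL ℝ : Eucl n →L[ℝ] Eucl n →L[ℝ] ℝ))‖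
      ≤ |h1 (‖x‖ ^ 2)| * 2 := by
    refine (ContinuousLinearMap.opNorm_smul_le _ _).trans ?_
    rw [Real.norm_eq_abs]
    exact mul_le_mul_of_nonneg_left h2I (abs_nonneg _)
  have hxn : ‖(2 • innerSL ℝ x : Eucl n →L[ℝ] ℝ)‖ ≤ 2 * ‖x‖ := by
    rw [two_smul]
    refine (ContinuousLinearMap.opNorm_add_le _ _).trans ?_
    rw [innerSL_apply_norm]
    linarith
  have hC : ‖(h2 (‖x‖ ^ 2) • (2 • innerSL ℝ x)).smulRight (2 • innerSL ℝ x)‖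
      ≤ |h2 (‖x‖ ^ 2)| * (2 * ‖x‖) * (2 * ‖x‖) := by
    refine (ContinuousLinearMap.norm_smulRight_apply _ _).le.trans ?_
    have h1' : ‖h2 (‖x‖ ^ 2) • (2 • innerSL ℝ x : Eucl n →L[ℝ] ℝ)‖
        ≤ |h2 (‖x‖ ^ 2)| * (2 * ‖x‖) := by
      refine (ContinuousLinearMap.opNorm_smul_le _ _).trans ?_
      rw [Real.norm_eq_abs]
      exact mul_le_mul_of_nonneg_left hxn (abs_nonneg _)
    exact mul_le_mul h1' hxn (norm_nonneg _) (by positivity)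
  exact (ContinuousLinearMap.opNorm_add_le _ _).trans (add_le_add hA hC)

end PsiAux

open PsiAux in
/-- **Estimates on `ψ` (second derivative).** There is `C > 0` with
`|D²ψ(x)| ≤ C(1 + ψ(x)^{1/2})/(|x|²+1)` for all `x` (operator norm of the Hessian,
i.e. the norm of the second derivative as a bilinear form). -/
theorem psi_hessian_bound {n : ℕ} (hn : 1 ≤ n) :
    ∃ C > (0 : ℝ), ∀ x : Eucl n,
      ‖iteratedFDeriv ℝ 2 (psiFun (n := n)) x‖
        ≤ C * (1 + (psiFun x) ^ ((1 : ℝ) / 2)) / (‖x‖ ^ 2 + 1) := by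
  refine ⟨6, by norm_num, fun x => ?_⟩
  set t : ℝ := ‖x‖ ^ 2 with htdef
  have ht0 : 0 ≤ t := by positivity
  have ht1 : (1 : ℝ) ≤ t + 1 := by linarith
  have htpos : (0 : ℝ) < t + 1 := by linarith
  set L : ℝ := Real.log (t + 1) / 2 + 1 with hLdef
  have hlog : 0 ≤ Real.log (t + 1) := Real.log_nonneg ht1
  have hL1 : 1 ≤ L := by simp only [hLdef]; linarith
  have hL0 : 0 ≤ L := by linarith
  -- identify the norm of the second derivative
  have hnorm : ‖iteratedFDeriv ℝ 2 (psiFun (n := n)) x‖ = ‖B x‖ := by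
    rw [← norm_iteratedFDeriv_fderiv, ← norm_iteratedFDeriv_fderiv,
      norm_iteratedFDeriv_zero, fderiv_psi, (hasFDerivAt_D x).fderiv]
  rw [hnorm]
  -- bound the pieces
  have hh1 : |h1 t| = L / (t + 1) := by
    rw [abs_of_nonneg]
    · rfl
    · exact div_nonneg hL0 htpos.le
  have hh2 : |h2 t| ≤ L / (t + 1) ^ 2 := by
    have : h2 t = -((L - 1 / 2) / (t + 1) ^ 2) := by
      unfold h2; rw [hLdef]; ring
    rw [this, abs_neg, abs_of_nonneg (div_nonneg (by linarith) (by positivity))]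
    gcongr
    · linarith
  have hxsq : (2 * ‖x‖) * (2 * ‖x‖) = 4 * t := by rw [htdef]; ring
  have key : ‖B x‖ ≤ 6 * L / (t + 1) := by
    calc ‖B x‖ ≤ |h1 t| * 2 + |h2 t| * (2 * ‖x‖) * (2 * ‖x‖) := norm_B_le x
      _ = |h1 t| * 2 + |h2 t| * (4 * t) := by rw [mul_assoc, hxsq]
      _ ≤ (L / (t + 1)) * 2 + (L / (t + 1) ^ 2) * (4 * t) := by
          gcongr
          · rw [hh1]
      _ ≤ (L / (t + 1)) * 2 + (L / (t + 1) ^ 2) * (4 * (t + 1)) := by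
          gcongr; linarith
      _ = 6 * L / (t + 1) := by field_simp; ring
  -- identify `ψ^{1/2}`
  have hpsi : psiFun x = L ^ 2 := by
    rw [psiFun_eq, h, hLdef]
  have hhalf : (psiFun x) ^ ((1 : ℝ) / 2) = L := by
    rw [hpsi, ← Real.rpow_natCast L 2, ← Real.rpow_mul hL0]
    norm_num
  rw [hhalf]
  calc ‖B x‖ ≤ 6 * L / (t + 1) := key
    _ ≤ 6 * (1 + L) / (t + 1) := by gcongr; linarith
    _ = 6 * (1 + L) / (‖x‖ ^ 2 + 1) := by rw [htdef]
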